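/- Let S and 𝒜 be finite types. For i = 1, 2 let μ_i : S → ℝ and π_i : S → 𝒜 → ℝ be nonnegative with Σ_s μ_i(s) = 1 and Σ_a π_i(s,a) = 1 for every s. Let d : S × 𝒜 → ℝ and h_1, …, h_N : S × 𝒜 → ℝ with |d(s,a)| ≤ U_c and |h_k(s,a)| ≤ U_c, let α ∈ ℝ^N with |α_k| ≤ U_α, let M > 0, and let γ¹, γ² ∈ ℝ^N with 0 ≤ γ^i_k ≤ M. Define L_i = Σ_{s,a} μ_i(s)π_i(s,a) (d(s,a) + Σ_{k=1}^N γ^i_k (h_k(s,a) − α_k)) and U_r = U_c + NM(U_c + U_α). If (1/2) Σ_{s,a} |μ₁(s)π₁(s,a) − μ₂(s)π₂(s,a)| ≤ K, then |L₁ − L₂| ≤ N(U_c + U_α) · max_{k} |γ¹_k − γ²_k| + 2U_r K. -/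

import Mathlib

/-!
Write `p₁, p₂` for the two state-action distributions and `f_γ` for the Lagrangian cost. Then
`L₁ - L₂ = (E_{p₁} f_{γ¹} - E_{p₁} f_{γ²}) + (E_{p₁} f_{γ²} - E_{p₂} f_{γ²})`.
The first term is an average of `f_{γ¹} - f_{γ²} = ∑ₖ (γ¹ₖ - γ²ₖ)(hₖ - αₖ)`, which is bounded by
`N (U_c + U_α) maxₖ |γ¹ₖ - γ²ₖ|` pointwise; the second is at most `‖f_{γ²}‖_∞ ∑ |p₁ - p₂| ≤ U_r · 2K`.
-/

open Finset

lemma abs_sum_mul_le_card_mul {ι : Type*} [Fintype ι] {x y : ι → ℝ} {X Y : ℝ}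
    (hx : ∀ i, |x i| ≤ X) (hy : ∀ i, |y i| ≤ Y) :
    |∑ i, x i * y i| ≤ Fintype.card ι * X * Y := by
  calc |∑ i, x i * y i| ≤ ∑ i, |x i| * |y i| := by
        simpa only [abs_mul] using abs_sum_le_sum_abs (fun i => x i * y i) univ
    _ ≤ ∑ _i : ι, X * Y := sum_le_sum fun i _ =>
        mul_le_mul (hx i) (hy i) (abs_nonneg _) ((abs_nonneg _).trans (hx i))
    _ = Fintype.card ι * X * Y := by rw [sum_const, card_univ, nsmul_eq_mul, mul_assoc]

lemma abs_sum_mul_sub_sum_mul_le {ι : Type*} [Fintype ι] (p q : ι → ℝ) {f : ι → ℝ} {B : ℝ}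
    (hf : ∀ i, |f i| ≤ B) :
    |∑ i, p i * f i - ∑ i, q i * f i| ≤ (∑ i, |p i - q i|) * B := by
  rw [← sum_sub_distrib, sum_mul]
  refine (abs_sum_le_sum_abs _ _).trans (sum_le_sum fun i _ => ?_)
  rw [← sub_mul, abs_mul]
  exact mul_le_mul_of_nonneg_left (hf i) (abs_nonneg _)

lemma abs_sum_mul_sub_sum_mul_le_of_sum_eq_one {ι : Type*} [Fintype ι] {p f g : ι → ℝ} {C : ℝ}
    (hp0 : ∀ i, 0 ≤ p i) (hp1 : ∑ i, p i = 1) (hfg : ∀ i, |f i - g i| ≤ C) :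
    |∑ i, p i * f i - ∑ i, p i * g i| ≤ C := by
  rw [← sum_sub_distrib]
  calc |∑ i, (p i * f i - p i * g i)| ≤ ∑ i, p i * |f i - g i| := by
        refine (abs_sum_le_sum_abs _ _).trans (le_of_eq (sum_congr rfl fun i _ => ?_))
        rw [← mul_sub, abs_mul, abs_of_nonneg (hp0 i)]
    _ ≤ ∑ i, p i * C := sum_le_sum fun i _ => mul_le_mul_of_nonneg_left (hfg i) (hp0 i)
    _ = C := by rw [← sum_mul, hp1, one_mul]

lemma sum_prod_mul_eq_one {α β : Type*} [Fintype α] [Fintype β] {μ : α → ℝ} {π : α → β → ℝ}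
    (hμ : ∑ s, μ s = 1) (hπ : ∀ s, ∑ a, π s a = 1) :
    ∑ x : α × β, μ x.1 * π x.1 x.2 = 1 := by
  rw [Fintype.sum_prod_type' fun s a => μ s * π s a]
  simp_rw [← mul_sum, hπ, mul_one]
  exact hμ

section LagrangianCost

variable {X : Type*} {N : ℕ}

def lagrangianCost (c : X → ℝ) (h : Fin N → X → ℝ) (α γ : Fin N → ℝ) (x : X) : ℝ :=
  c x + ∑ k, γ k * (h k x - α k)

variable {c : X → ℝ} {h : Fin N → X → ℝ} {α : Fin N → ℝ} {Uc Uα : ℝ}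

lemma abs_lagrangianCost_le (hc : ∀ x, |c x| ≤ Uc) (hh : ∀ k x, |h k x| ≤ Uc)
    (hα : ∀ k, |α k| ≤ Uα) {γ : Fin N → ℝ} {M : ℝ} (hγ : ∀ k, |γ k| ≤ M) (x : X) :
    |lagrangianCost c h α γ x| ≤ Uc + N * M * (Uc + Uα) := by
  have hsum := abs_sum_mul_le_card_mul hγ fun k =>
    (abs_sub _ _).trans (add_le_add (hh k x) (hα k))
  rw [Fintype.card_fin] at hsum
  exact (abs_add_le _ _).trans (add_le_add (hc x) hsum)

lemma lagrangianCost_sub_lagrangianCost (γ₁ γ₂ : Fin N → ℝ) (x : X) :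
    lagrangianCost c h α γ₁ x - lagrangianCost c h α γ₂ x =
      ∑ k, (γ₁ k - γ₂ k) * (h k x - α k) := by
  simp only [lagrangianCost, add_sub_add_left_eq_sub, ← sum_sub_distrib, sub_mul]

lemma abs_lagrangianCost_sub_le (hh : ∀ k x, |h k x| ≤ Uc) (hα : ∀ k, |α k| ≤ Uα)
    {γ₁ γ₂ : Fin N → ℝ} {G : ℝ} (hγ : ∀ k, |γ₁ k - γ₂ k| ≤ G) (x : X) :
    |lagrangianCost c h α γ₁ x - lagrangianCost c h α γ₂ x| ≤ N * (Uc + Uα) * G := by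
  have hsum := abs_sum_mul_le_card_mul hγ fun k =>
    (abs_sub _ _).trans (add_le_add (hh k x) (hα k))
  rw [Fintype.card_fin] at hsum
  rw [lagrangianCost_sub_lagrangianCost]
  linarith

end LagrangianCost

theorem stmt_8_general (S 𝒜 : Type*) [Fintype S] [Fintype 𝒜] (N : ℕ)
    (μ₁ μ₂ : S → ℝ) (π₁ π₂ : S → 𝒜 → ℝ)
    (hμ₁0 : ∀ s, 0 ≤ μ₁ s)
    (hπ₁0 : ∀ s a, 0 ≤ π₁ s a)
    (hμ₁1 : ∑ s, μ₁ s = 1)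
    (hπ₁1 : ∀ s, ∑ a, π₁ s a = 1)
    (dc : S → 𝒜 → ℝ) (h : Fin N → S → 𝒜 → ℝ) (α : Fin N → ℝ)
    (Uc Uα M K : ℝ)
    (hdc : ∀ s a, |dc s a| ≤ Uc) (hh : ∀ k s a, |h k s a| ≤ Uc)
    (hα : ∀ k, |α k| ≤ Uα)
    (γ₁ γ₂ : Fin N → ℝ)
    (hγ₂ : ∀ k, 0 ≤ γ₂ k ∧ γ₂ k ≤ M)
    (L₁ L₂ Ur : ℝ)
    (hL₁ : L₁ = ∑ s, ∑ a, μ₁ s * π₁ s a * (dc s a + ∑ k, γ₁ k * (h k s a - α k)))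
    (hL₂ : L₂ = ∑ s, ∑ a, μ₂ s * π₂ s a * (dc s a + ∑ k, γ₂ k * (h k s a - α k)))
    (hUr : Ur = Uc + N * M * (Uc + Uα))
    (hK : (1 / 2) * ∑ s, ∑ a, |μ₁ s * π₁ s a - μ₂ s * π₂ s a| ≤ K) :
    |L₁ - L₂| ≤ N * (Uc + Uα) * (⨆ k, |γ₁ k - γ₂ k|) + 2 * Ur * K := by
  set p₁ : S × 𝒜 → ℝ := fun x => μ₁ x.1 * π₁ x.1 x.2
  set p₂ : S × 𝒜 → ℝ := fun x => μ₂ x.1 * π₂ x.1 x.2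
  set f : (Fin N → ℝ) → S × 𝒜 → ℝ :=
    lagrangianCost (fun x => dc x.1 x.2) (fun k x => h k x.1 x.2) α
  have hL₁' : L₁ = ∑ x, p₁ x * f γ₁ x := by rw [hL₁, ← Fintype.sum_prod_type']; rfl
  have hL₂' : L₂ = ∑ x, p₂ x * f γ₂ x := by rw [hL₂, ← Fintype.sum_prod_type']; rfl
  have hp₁1 : ∑ x, p₁ x = 1 := sum_prod_mul_eq_one hμ₁1 hπ₁1
  have hTV : ∑ x, |p₁ x - p₂ x| ≤ 2 * K := by
    rw [Fintype.sum_prod_type' fun s a => |μ₁ s * π₁ s a - μ₂ s * π₂ s a|]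
    linarith
  have hf₂ : ∀ x, |f γ₂ x| ≤ Ur := by
    rw [hUr]
    exact abs_lagrangianCost_le (fun x : S × 𝒜 => hdc x.1 x.2)
      (fun k (x : S × 𝒜) => hh k x.1 x.2) hα fun k => (abs_of_nonneg (hγ₂ k).1).trans_le (hγ₂ k).2
  have hUr0 : 0 ≤ Ur := by
    obtain ⟨x, -, -⟩ := exists_ne_zero_of_sum_ne_zero (hp₁1.trans_ne one_ne_zero)
    exact (abs_nonneg _).trans (hf₂ x)
  have hγ : ∀ k, |γ₁ k - γ₂ k| ≤ ⨆ k, |γ₁ k - γ₂ k| := le_ciSup (Finite.bddAbove_range _)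
  have hγ₁₂ := abs_sum_mul_sub_sum_mul_le_of_sum_eq_one
    (fun x => mul_nonneg (hμ₁0 x.1) (hπ₁0 x.1 x.2)) hp₁1
    (abs_lagrangianCost_sub_le (c := fun x : S × 𝒜 => dc x.1 x.2)
      (fun k (x : S × 𝒜) => hh k x.1 x.2) hα hγ)
  have hp₁₂ := abs_sum_mul_sub_sum_mul_le p₁ p₂ hf₂
  calc |L₁ - L₂|
      = |(∑ x, p₁ x * f γ₁ x - ∑ x, p₁ x * f γ₂ x) +
          (∑ x, p₁ x * f γ₂ x - ∑ x, p₂ x * f γ₂ x)| := by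
        rw [hL₁', hL₂', sub_add_sub_cancel]
    _ ≤ N * (Uc + Uα) * (⨆ k, |γ₁ k - γ₂ k|) + (∑ x, |p₁ x - p₂ x|) * Ur :=
        (abs_add_le _ _).trans (add_le_add hγ₁₂ hp₁₂)
    _ ≤ N * (Uc + Uα) * (⨆ k, |γ₁ k - γ₂ k|) + 2 * Ur * K := by
        linarith [mul_le_mul_of_nonneg_right hTV hUr0]

/-- Lemma 5 of the paper: joint Lipschitz-type bound
`|L₁ − L₂| ≤ N(U_c + U_α)·max_k|γ¹_k − γ²_k| + 2U_r·K` for the average Lagrangian cost,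
where `K` bounds the total variation distance between the two stationary state-action
distributions and `U_r = U_c + NM(U_c + U_α)`. -/
theorem stmt_8 (S 𝒜 : Type*) [Fintype S] [Fintype 𝒜] (N : ℕ)
    (μ₁ μ₂ : S → ℝ) (π₁ π₂ : S → 𝒜 → ℝ)
    (hμ₁0 : ∀ s, 0 ≤ μ₁ s) (hμ₂0 : ∀ s, 0 ≤ μ₂ s)
    (hπ₁0 : ∀ s a, 0 ≤ π₁ s a) (hπ₂0 : ∀ s a, 0 ≤ π₂ s a)
    (hμ₁1 : ∑ s, μ₁ s = 1) (hμ₂1 : ∑ s, μ₂ s = 1)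
    (hπ₁1 : ∀ s, ∑ a, π₁ s a = 1) (hπ₂1 : ∀ s, ∑ a, π₂ s a = 1)
    (dc : S → 𝒜 → ℝ) (h : Fin N → S → 𝒜 → ℝ) (α : Fin N → ℝ)
    (Uc Uα M K : ℝ) (hM : 0 < M)
    (hdc : ∀ s a, |dc s a| ≤ Uc) (hh : ∀ k s a, |h k s a| ≤ Uc)
    (hα : ∀ k, |α k| ≤ Uα)
    (γ₁ γ₂ : Fin N → ℝ)
    (hγ₁ : ∀ k, 0 ≤ γ₁ k ∧ γ₁ k ≤ M) (hγ₂ : ∀ k, 0 ≤ γ₂ k ∧ γ₂ k ≤ M)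
    (L₁ L₂ Ur : ℝ)
    (hL₁ : L₁ = ∑ s, ∑ a, μ₁ s * π₁ s a * (dc s a + ∑ k, γ₁ k * (h k s a - α k)))
    (hL₂ : L₂ = ∑ s, ∑ a, μ₂ s * π₂ s a * (dc s a + ∑ k, γ₂ k * (h k s a - α k)))
    (hUr : Ur = Uc + N * M * (Uc + Uα))
    (hK : (1 / 2) * ∑ s, ∑ a, |μ₁ s * π₁ s a - μ₂ s * π₂ s a| ≤ K) :
    |L₁ - L₂| ≤ N * (Uc + Uα) * (⨆ k, |γ₁ k - γ₂ k|) + 2 * Ur * K :=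
  stmt_8_general S 𝒜 N μ₁ μ₂ π₁ π₂ hμ₁0 hπ₁0 hμ₁1 hπ₁1 dc h α Uc Uα M K hdc hh hα γ₁ γ₂ hγ₂ L₁ L₂ Ur
    hL₁ hL₂ hUr hK
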